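/- Depth does not increase under instantiation and normalization: if Φ ∈ AllParSubst(Par(I)), then depth(nf(IΦ)) ≤ depth(I). -/

import Mathlib

/-- Types over a type alphabet whose constructors are at most unary:
type parameters, nullary constructors and unary constructors. -/
inductive UTy (C : Type) where
  | param : ℕ → UTy C
  | con0 : C → UTy C
  | con1 : C → UTy C → UTy C
deriving DecidableEq

/-- The subtype relation on types (arguments are compared only up to the
minimum of the arities). -/
inductive USub {C : Type} [LE C] : UTy C → UTy C → Prop where
  | param (n : ℕ) : USub (.param n) (.param n)
  | con00 {K L : C} : K ≤ L → USub (.con0 K) (.con0 L)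
  | con01 {K L : C} {τ : UTy C} : K ≤ L → USub (.con0 K) (.con1 L τ)
  | con10 {K L : C} {σ : UTy C} : K ≤ L → USub (.con1 K σ) (.con0 L)
  | con11 {K L : C} {σ τ : UTy C} : K ≤ L → USub σ τ →
      USub (.con1 K σ) (.con1 L τ)

/-- Applying a parameter substitution to a type. -/
def UTy.subst {C : Type} (Φ : ℕ → UTy C) : UTy C → UTy C
  | .param n => Φ n
  | .con0 K => .con0 K
  | .con1 K σ => .con1 K (σ.subst Φ)

/-- The list of type parameters of a type. -/
def UTy.params {C : Type} : UTy C → List ℕ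
  | .param n => [n]
  | .con0 _ => []
  | .con1 _ σ => σ.params

/-- The depth of a type. -/
def UTy.depth {C : Type} : UTy C → ℕ
  | .param _ => 0
  | .con0 _ => 1
  | .con1 _ σ => 1 + σ.depth

/-- The domain of a parameter substitution. -/
def substDom {C : Type} (Φ : ℕ → UTy C) : Set ℕ := {n | Φ n ≠ .param n}

/-- `AllParSubst A` is the set of parameter substitutions `Φ` with
`dom(Φ) ⊆ A`, `depth(Φ) ≤ 1`, and `Par(αΦ) ⊆ {α}` but `αΦ ≠ α`
for all `α ∈ A`. -/
def AllParSubst {C : Type} (A : Set ℕ) : Set (ℕ → UTy C) :=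
  {Φ | substDom Φ ⊆ A ∧ (∀ m ∈ substDom Φ, (Φ m).depth ≤ 1) ∧
    ∀ a ∈ A, (∀ n ∈ (Φ a).params, n = a) ∧ Φ a ≠ .param a}

/-- A type inequation `σ ⪯ τ`. -/
abbrev UIneq (C : Type) := UTy C × UTy C

/-- A system of type inequations is solvable. -/
def USolvable {C : Type} [LE C] (I : Set (UIneq C)) : Prop :=
  ∃ Φ : ℕ → UTy C, ∀ p ∈ I, USub (p.1.subst Φ) (p.2.subst Φ)

/-- The set of type parameters of a system of type inequations. -/
def sysParams {C : Type} (I : Set (UIneq C)) : Set ℕ :=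
  {n | ∃ p ∈ I, n ∈ p.1.params ∨ n ∈ p.2.params}

/-- Applying a parameter substitution to a system of type inequations. -/
def applySys {C : Type} (Φ : ℕ → UTy C) (I : Set (UIneq C)) : Set (UIneq C) :=
  (fun p : UIneq C => (p.1.subst Φ, p.2.subst Φ)) '' I

/-- The possible results of normalizing a type inequation: `true`, `false`,
or an inequation. -/
inductive NFr (C : Type) where
  | isTrue : NFr C
  | isFalse : NFr C
  | ineq : UTy C → UTy C → NFr C

open Classical in
/-- The normal form `nf(σ ⪯ τ)` of a type inequation. -/
noncomputable def nf {C : Type} [LE C] : UTy C → UTy C → NFr C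
  | .param a, τ => .ineq (.param a) τ
  | σ, .param a => .ineq σ (.param a)
  | .con0 K, .con0 L => if K ≤ L then .isTrue else .isFalse
  | .con0 K, .con1 L _ => if K ≤ L then .isTrue else .isFalse
  | .con1 K _, .con0 L => if K ≤ L then .isTrue else .isFalse
  | .con1 K σ, .con1 L τ => if K ≤ L then nf σ τ else .isFalse

open Classical in
/-- Normalizing a system of type inequations: each inequation is replaced by
its normal form, inequations equivalent to `true` are discarded, and if some
inequation is equivalent to `false` the whole system collapses to the
unsolvable system (represented by `none`). -/
noncomputable def nfSys {C : Type} [LE C] (I : Set (UIneq C)) :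
    Option (Set (UIneq C)) :=
  if ∃ p ∈ I, nf p.1 p.2 = NFr.isFalse then none
  else some {q | ∃ p ∈ I, nf p.1 p.2 = NFr.ineq q.1 q.2}


/-!
Every parameter of `I` is sent by `Φ` to a type of depth at most one that is not a parameter,
so instantiation raises the depth of an inequation by at most one. Normalizing an inequation
whose two sides are both non-parameters either yields `true`/`false` or peels off at least one
pair of unary constructors, which lowers the depth by at least one.
-/

namespace UTy

variable {C : Type}

theorem depth_subst_le (Φ : ℕ → UTy C) (σ : UTy C)
    (h : ∀ a ∈ σ.params, (Φ a).depth ≤ 1) :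
    (σ.subst Φ).depth ≤ σ.depth + 1 := by
  induction σ with
  | param a => simpa [subst, depth] using h a (by simp [params])
  | con0 K => simp [subst, depth]
  | con1 K σ ih =>
    have := ih (by simpa [params] using h)
    simp only [subst, depth]
    omega

theorem subst_ne_param (Φ : ℕ → UTy C) (σ : UTy C)
    (h : ∀ a ∈ σ.params, ∀ n, Φ a ≠ .param n) (n : ℕ) :
    σ.subst Φ ≠ .param n := by
  cases σ with
  | param a => exact h a (by simp [params]) n
  | con0 K => simp [subst]
  | con1 K σ => simp [subst]

end UTy

section Normalization

variable {C : Type} [LE C]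

theorem depth_le_of_nf_eq_ineq {σ τ q₁ q₂ : UTy C} (h : nf σ τ = .ineq q₁ q₂) :
    max q₁.depth q₂.depth ≤ max σ.depth τ.depth := by
  induction σ generalizing τ with
  | param a => cases h; rfl
  | con0 K =>
    cases τ with
    | param b => cases h; rfl
    | con0 L | con1 L τ => simp only [nf] at h; split at h <;> cases h
  | con1 K σ ih =>
    cases τ with
    | param b => cases h; rfl
    | con0 L => simp only [nf] at h; split at h <;> cases h
    | con1 L τ =>
      simp only [nf] at h
      split at h
      · have := ih h
        simp only [UTy.depth]
        omega
      · cases h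

theorem depth_lt_of_nf_eq_ineq {σ τ q₁ q₂ : UTy C}
    (hσ : ∀ n, σ ≠ .param n) (hτ : ∀ n, τ ≠ .param n) (h : nf σ τ = .ineq q₁ q₂) :
    max q₁.depth q₂.depth < max σ.depth τ.depth := by
  cases σ with
  | param a => exact absurd rfl (hσ a)
  | con0 K =>
    cases τ with
    | param b => exact absurd rfl (hτ b)
    | con0 L | con1 L τ => simp only [nf] at h; split at h <;> cases h
  | con1 K σ =>
    cases τ with
    | param b => exact absurd rfl (hτ b)
    | con0 L => simp only [nf] at h; split at h <;> cases h
    | con1 L τ =>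
      simp only [nf] at h
      split at h
      · have := depth_le_of_nf_eq_ineq h
        simp only [UTy.depth]
        omega
      · cases h

theorem exists_nf_eq_ineq_of_nfSys_eq_some {I J : Set (UIneq C)} (h : nfSys I = some J)
    {q : UIneq C} (hq : q ∈ J) : ∃ p ∈ I, nf p.1 p.2 = .ineq q.1 q.2 := by
  unfold nfSys at h
  split at h
  · cases h
  · cases h
    exact hq

end Normalization

namespace AllParSubst

variable {C : Type} {A : Set ℕ} {Φ : ℕ → UTy C} {a : ℕ}

theorem ne_param (hΦ : Φ ∈ AllParSubst A) (ha : a ∈ A) (n : ℕ) : Φ a ≠ .param n := by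
  obtain ⟨hpar, hne⟩ := hΦ.2.2 a ha
  rintro hn
  obtain rfl : n = a := hpar n (by simp [hn, UTy.params])
  exact hne hn

theorem depth_le_one (hΦ : Φ ∈ AllParSubst A) (ha : a ∈ A) : (Φ a).depth ≤ 1 :=
  hΦ.2.1 a (hΦ.2.2 a ha).2

end AllParSubst

/-- depth does not increase under instantiation and
normalization: if `Φ ∈ AllParSubst(Par I)` and every inequation of `I` has
depth at most `d`, then every inequation of `nf(IΦ)` has depth at most `d`
(the failed system `{false}` has depth `0` by definition). -/
theorem depth_nf_inst_le {C : Type} [PartialOrder C] (I : Set (UIneq C))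
    (Φ : ℕ → UTy C) (hΦ : Φ ∈ AllParSubst (C := C) (sysParams I))
    (d : ℕ) (hd : ∀ p ∈ I, max p.1.depth p.2.depth ≤ d) :
    ∀ J : Set (UIneq C), nfSys (applySys Φ I) = some J →
      ∀ q ∈ J, max q.1.depth q.2.depth ≤ d := by
  intro J hJ q hq
  obtain ⟨_, ⟨p, hp, rfl⟩, hnf⟩ := exists_nf_eq_ineq_of_nfSys_eq_some hJ hq
  have mem₁ : ∀ a ∈ p.1.params, a ∈ sysParams I := fun a ha => ⟨p, hp, .inl ha⟩
  have mem₂ : ∀ a ∈ p.2.params, a ∈ sysParams I := fun a ha => ⟨p, hp, .inr ha⟩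
  have hlt := depth_lt_of_nf_eq_ineq
    (p.1.subst_ne_param Φ fun a ha => AllParSubst.ne_param hΦ (mem₁ a ha))
    (p.2.subst_ne_param Φ fun a ha => AllParSubst.ne_param hΦ (mem₂ a ha)) hnf
  have h₁ := p.1.depth_subst_le Φ fun a ha => AllParSubst.depth_le_one hΦ (mem₁ a ha)
  have h₂ := p.2.depth_subst_le Φ fun a ha => AllParSubst.depth_le_one hΦ (mem₂ a ha)
  have hp_le := hd p hp
  omega
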